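/- arXiv:1001.4435 — 4 statements merged into one kernel-verified Lean document; each statement's English description precedes it below -/
import Mathlib

section
/- Let Q_1, Q_2, Q_3 be the vertices of a (nondegenerate) triangle in the plane, and for each pair (i,j) let h_{ij} be a line perpendicular to Q_iQ_j with Pythagorean coordinate ψ_{ij} = d(P,Q_i)² − d(P,Q_j)² for P ∈ h_{ij}. Then h_{12}, h_{23}, h_{31} are concurrent if and only if ψ_{12} + ψ_{23} + ψ_{31} = 0. In particular, the three perpendicular bisectors of the sides of a triangle are concurrent. -/
/-!
At a common point of the three lines the differences of squared distances telescope, so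
`ψ₁₂ + ψ₂₃ + ψ₃₁ = 0`. Conversely, `P ↦ d(P,Qᵢ)² - d(P,Q₁)²` is affine with linear part
`-2⟪Qᵢ - Q₁, ·⟫`; since the vectors `Qᵢ - Q₁` are linearly independent, these functionals can take
any prescribed pair of values, and the third line then passes through the point automatically.
-/

open scoped RealInnerProductSpace

variable {E : Type*} [NormedAddCommGroup E] [InnerProductSpace ℝ E]

theorem dist_sq_sub_dist_sq (P A B : E) :
    dist P A ^ 2 - dist P B ^ 2 = ‖A‖ ^ 2 - ‖B‖ ^ 2 - 2 * ⟪A - B, P⟫ := by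
  rw [dist_eq_norm, dist_eq_norm, norm_sub_sq_real, norm_sub_sq_real, inner_sub_left,
    real_inner_comm P A, real_inner_comm P B]
  ring

/-- Riesz representation on the finite-dimensional span of `v`, so `E` need not be complete. -/
theorem LinearIndependent.exists_inner_eq {ι : Type*} [Finite ι] {v : ι → E}
    (hv : LinearIndependent ℝ v) (c : ι → ℝ) : ∃ P : E, ∀ i, ⟪v i, P⟫ = c i := by
  let K := Submodule.span ℝ (Set.range v)
  have : FiniteDimensional ℝ K := FiniteDimensional.span_of_finite ℝ (Set.finite_range v)
  let f : K →ₗ[ℝ] ℝ := Finsupp.linearCombination ℝ c ∘ₗ hv.repr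
  refine ⟨((InnerProductSpace.toDual ℝ K).symm (LinearMap.toContinuousLinearMap f) : E),
    fun i => ?_⟩
  have hvi : v i ∈ K := Submodule.subset_span (Set.mem_range_self i)
  rw [real_inner_comm]
  have := InnerProductSpace.toDual_symm_apply (𝕜 := ℝ) (E := K) (x := ⟨v i, hvi⟩)
    (y := LinearMap.toContinuousLinearMap f)
  rw [Submodule.coe_inner] at this
  simpa [f, hv.repr_eq_single i ⟨v i, hvi⟩ rfl] using this

theorem AffineIndependent.exists_dist_sq_sub_dist_sq_eq {ι : Type*} [Finite ι] {p : ι → E}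
    (hp : AffineIndependent ℝ p) (i₀ : ι) (c : ι → ℝ) :
    ∃ P : E, ∀ i ≠ i₀, dist P (p i) ^ 2 - dist P (p i₀) ^ 2 = c i := by
  have hv := (affineIndependent_iff_linearIndependent_vsub ℝ p i₀).mp hp
  obtain ⟨P, hP⟩ := hv.exists_inner_eq fun i => (‖p i‖ ^ 2 - ‖p i₀‖ ^ 2 - c i) / 2
  refine ⟨P, fun i hi => ?_⟩
  have := hP ⟨i, hi⟩
  simp only [vsub_eq_sub] at this
  rw [dist_sq_sub_dist_sq, this]
  ring

theorem nonempty_inter_dist_sq_sub_dist_sq_iff {Q₁ Q₂ Q₃ : E}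
    (hQ : AffineIndependent ℝ ![Q₁, Q₂, Q₃]) (ψ₁₂ ψ₂₃ ψ₃₁ : ℝ) :
    ({P : E | dist P Q₁ ^ 2 - dist P Q₂ ^ 2 = ψ₁₂} ∩
      {P | dist P Q₂ ^ 2 - dist P Q₃ ^ 2 = ψ₂₃} ∩
      {P | dist P Q₃ ^ 2 - dist P Q₁ ^ 2 = ψ₃₁}).Nonempty ↔ ψ₁₂ + ψ₂₃ + ψ₃₁ = 0 := by
  constructor
  · rintro ⟨P, ⟨h₁₂, h₂₃⟩, h₃₁⟩
    simp only [Set.mem_ofPred_eq] at h₁₂ h₂₃ h₃₁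
    linarith
  · intro hψ
    obtain ⟨P, hP⟩ := hQ.exists_dist_sq_sub_dist_sq_eq 0 ![0, -ψ₁₂, ψ₃₁]
    have h₂₁ : dist P Q₂ ^ 2 - dist P Q₁ ^ 2 = -ψ₁₂ := hP 1 (by decide)
    have h₃₁ : dist P Q₃ ^ 2 - dist P Q₁ ^ 2 = ψ₃₁ := hP 2 (by decide)
    refine ⟨P, ⟨?_, ?_⟩, h₃₁⟩ <;> simp only [Set.mem_ofPred_eq] <;> linarith

/-- For a nondegenerate triangle Q₁Q₂Q₃ in the plane and lines
h_{ij} = {P : d(P,Q_i)² − d(P,Q_j)² = ψ_{ij}} (each perpendicular to Q_iQ_j), the lines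
h₁₂, h₂₃, h₃₁ are concurrent iff ψ₁₂ + ψ₂₃ + ψ₃₁ = 0.  In particular the three
perpendicular bisectors (ψ = 0) are concurrent. -/
theorem stmt_4 (Q₁ Q₂ Q₃ : EuclideanSpace ℝ (Fin 2))
    (hQ : AffineIndependent ℝ ![Q₁, Q₂, Q₃]) (ψ₁₂ ψ₂₃ ψ₃₁ : ℝ) :
    (({P : EuclideanSpace ℝ (Fin 2) | dist P Q₁ ^ 2 - dist P Q₂ ^ 2 = ψ₁₂} ∩
      {P | dist P Q₂ ^ 2 - dist P Q₃ ^ 2 = ψ₂₃} ∩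
      {P | dist P Q₃ ^ 2 - dist P Q₁ ^ 2 = ψ₃₁}).Nonempty ↔ ψ₁₂ + ψ₂₃ + ψ₃₁ = 0) ∧
    ({P : EuclideanSpace ℝ (Fin 2) | dist P Q₁ = dist P Q₂} ∩
      {P | dist P Q₂ = dist P Q₃} ∩ {P | dist P Q₃ = dist P Q₁}).Nonempty := by
  refine ⟨nonempty_inter_dist_sq_sub_dist_sq_iff hQ ψ₁₂ ψ₂₃ ψ₃₁, ?_⟩
  obtain ⟨P, ⟨h₁₂, h₂₃⟩, h₃₁⟩ :=
    (nonempty_inter_dist_sq_sub_dist_sq_iff hQ 0 0 0).mpr (by norm_num)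
  simp only [Set.mem_ofPred_eq, sub_eq_zero] at h₁₂ h₂₃ h₃₁
  have dist_eq_of_sq_eq {A B : EuclideanSpace ℝ (Fin 2)} :
      dist P A ^ 2 = dist P B ^ 2 → dist P A = dist P B :=
    (sq_eq_sq₀ dist_nonneg dist_nonneg).mp
  exact ⟨P, ⟨dist_eq_of_sq_eq h₁₂, dist_eq_of_sq_eq h₂₃⟩, dist_eq_of_sq_eq h₃₁⟩
end

section
/- Let k, n be positive integers and let [−k,k]K_n be the gain graph on n vertices with one edge of gain i between each pair of vertices for each i ∈ {−k, …, −1, 0, 1, …, k}. Taking gains modulo N for any integer N > nk, the number of zero-free proper colorings c : {1,…,n} → ℤ_N (colorings such that for all i ≠ j, c(i) − c(j) is not congruent to any element of {−k,…,k} mod N) equals N·(N − nk − 1)·(N − nk − 2)⋯(N − nk − n + 1) = N·(N−nk−1)_{n−1}. -/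
/-!
Translating a coloring so that `c 0 = 0` splits off a factor `N`. The remaining colorings are
determined by the integers `v i = (c i.succ).val`, which lie in `(k, N - k)` and are pairwise more
than `k` apart, and every such tuple comes from a coloring. Subtracting from each entry `k` times
the number of smaller entries closes every gap of size `> k` to a gap of size `≥ 1`; this is a
bijection onto the injective tuples in an interval of length `N - nk - 1`, of which there are
`(N - nk - 1)_{n-1}`.
-/

open Finset Function

namespace GainGraphColoring

section Spread

variable {ι : Type*}

def IsSpread (k : ℕ) (y : ι → ℤ) : Prop :=
  Pairwise fun i j => (k : ℤ) < |y i - y j|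

def spreadTuples (ι : Type*) (k : ℕ) (a b : ℤ) : Set (ι → ℤ) :=
  {y | (∀ i, a ≤ y i ∧ y i < b) ∧ IsSpread k y}

variable {k : ℕ} {y x : ι → ℤ} {i j : ι}

lemma isSpread_zero_iff : IsSpread 0 y ↔ Injective y := by
  simp only [IsSpread, Nat.cast_zero, abs_pos, sub_ne_zero, injective_iff_pairwise_ne]

lemma IsSpread.injective (hy : IsSpread k y) : Injective y :=
  isSpread_zero_iff.1 <| hy.mono fun _ _ => (Nat.cast_nonneg k).trans_lt

lemma IsSpread.add_lt (hy : IsSpread k y) (h : y i < y j) : y i + k < y j := by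
  have : (k : ℤ) < |y i - y j| := hy fun hij => h.ne (congrArg y hij)
  rw [abs_sub_comm, abs_of_pos (sub_pos.2 h)] at this
  linarith

lemma IsSpread.add_one_mul_card_le (hy : IsSpread k y) (s : Finset ι)
    {a b : ℤ} (hab : a ≤ b) (hs : ∀ t ∈ s, a ≤ y t ∧ y t + k < b) :
    (k + 1) * (#s : ℤ) ≤ b - a := by
  classical
  induction s using Finset.induction_on_max_value y generalizing b with
  | empty => simpa using hab
  | insert x s hx hmax ih =>
    obtain ⟨hax, hxb⟩ := hs x (mem_insert_self x s)
    have hs' : ∀ t ∈ s, a ≤ y t ∧ y t + k < y x := fun t ht =>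
      ⟨(hs t (mem_insert_of_mem ht)).1,
        hy.add_lt <| (hmax t ht).lt_of_ne fun h => hx (hy.injective h ▸ ht)⟩
    have := ih hax hs'
    rw [card_insert_of_notMem hx]
    push_cast
    linarith

end Spread

section Squeeze

variable {ι : Type*} [Fintype ι] {k : ℕ} {y x : ι → ℤ} {i j : ι}

def rank (y : ι → ℤ) (i : ι) : ℕ := #{t | y t < y i}

def squeeze (k : ℕ) (y : ι → ℤ) (i : ι) : ℤ := y i - k * rank y i

def stretch (k : ℕ) (x : ι → ℤ) (i : ι) : ℤ := x i + k * rank x i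

lemma rank_lt_rank (h : y i < y j) : rank y i < rank y j :=
  card_lt_card <| (ssubset_iff_of_subset fun t ht => by
    simp only [mem_filter, mem_univ, true_and] at ht ⊢; exact ht.trans h).2
    ⟨i, by simpa using h, by simp⟩

lemma rank_lt_card (y : ι → ℤ) (i : ι) : rank y i < Fintype.card ι :=
  card_lt_univ_of_notMem (x := i) (by simp)

lemma rank_eq_rank_of_eq (h : y i = y j) : rank y i = rank y j := by
  simp only [rank, h]

lemma rank_congr_of_lt_imp_lt {z : ι → ℤ} (hlt : ∀ i j, y i < y j → z i < z j)
    (heq : ∀ i j, y i = y j → z i = z j) : rank z = rank y := by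
  refine funext fun i => congrArg card <| filter_congr fun t _ => ⟨fun hz => ?_, hlt t i⟩
  rcases lt_trichotomy (y t) (y i) with h | h | h
  · exact h
  · exact absurd (heq t i h ▸ hz) (lt_irrefl _)
  · exact absurd (hlt i t h) hz.not_gt

lemma IsSpread.add_one_mul_rank_sub_le (hy : IsSpread k y) (h : y i < y j) :
    (k + 1) * ((rank y j : ℤ) - rank y i) ≤ y j - y i := by
  classical
  have hsub : (univ.filter fun t => y t < y i) ⊆ univ.filter fun t => y t < y j :=
    fun t => by simpa using fun ht : y t < y i => ht.trans h
  have := hy.add_one_mul_card_le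
    ((univ.filter fun t => y t < y j) \ univ.filter fun t => y t < y i) h.le fun t ht => by
    simp only [mem_sdiff, mem_filter, mem_univ, true_and, not_lt] at ht
    exact ⟨ht.2, hy.add_lt ht.1⟩
  rwa [card_sdiff_of_subset hsub, Nat.cast_sub (card_le_card hsub)] at this

lemma IsSpread.add_one_mul_rank_le (hy : IsSpread k y) {a : ℤ} (ha : ∀ i, a ≤ y i) (i : ι) :
    (k + 1) * (rank y i : ℤ) ≤ y i - a := by
  classical
  exact hy.add_one_mul_card_le _ (ha i) fun t ht => by
    simp only [mem_filter, mem_univ, true_and] at ht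
    exact ⟨ha t, hy.add_lt ht⟩

lemma IsSpread.add_one_mul_card_sub_rank_le (hy : IsSpread k y) {b : ℤ} (hb : ∀ i, y i < b)
    (i : ι) : (k + 1) * ((Fintype.card ι : ℤ) - rank y i) ≤ b + k - y i := by
  classical
  have := hy.add_one_mul_card_le ({t | ¬ y t < y i} : Finset ι) (a := y i) (b := b + k)
    (by linarith [hb i]) fun t ht => by
      simp only [mem_filter, mem_univ, true_and, not_lt] at ht
      exact ⟨ht, by linarith [hb t]⟩
  have hcard := card_filter_add_card_filter_not (s := univ) fun t => y t < y i
  rw [card_univ] at hcard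
  rw [← hcard, rank]
  push_cast
  linarith

lemma IsSpread.squeeze_lt_squeeze (hy : IsSpread k y) (h : y i < y j) :
    squeeze k y i < squeeze k y j := by
  have := hy.add_one_mul_rank_sub_le h
  have : rank y i < rank y j := rank_lt_rank h
  unfold squeeze
  linarith

lemma stretch_add_lt_stretch (h : x i < x j) : stretch k x i + k < stretch k x j := by
  have : rank x i < rank x j := rank_lt_rank h
  unfold stretch
  have : (k : ℤ) * rank x i + k ≤ k * rank x j := by
    rw [← mul_add_one]; exact mul_le_mul_of_nonneg_left (by exact_mod_cast this) k.cast_nonneg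
  linarith

lemma IsSpread.rank_squeeze (hy : IsSpread k y) : rank (squeeze k y) = rank y :=
  rank_congr_of_lt_imp_lt (fun _ _ => hy.squeeze_lt_squeeze) fun i j h => by
    simp only [squeeze, h, rank_eq_rank_of_eq h]

lemma rank_stretch : rank (stretch k x) = rank x :=
  rank_congr_of_lt_imp_lt (fun _ _ h => by linarith [stretch_add_lt_stretch (k := k) h])
    fun i j h => by simp only [stretch, h, rank_eq_rank_of_eq h]

lemma IsSpread.stretch_squeeze (hy : IsSpread k y) : stretch k (squeeze k y) = y :=
  funext fun i => by simp only [stretch, squeeze, hy.rank_squeeze, sub_add_cancel]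

lemma squeeze_stretch : squeeze k (stretch k x) = x :=
  funext fun i => by simp only [stretch, squeeze, rank_stretch, add_sub_cancel_right]

lemma IsSpread.isSpread_zero_squeeze (hy : IsSpread k y) : IsSpread 0 (squeeze k y) := by
  refine isSpread_zero_iff.2 fun i j h => hy.injective ?_
  by_contra hne
  rcases Ne.lt_or_gt hne with hlt | hlt
  · exact (hy.squeeze_lt_squeeze hlt).ne h
  · exact (hy.squeeze_lt_squeeze hlt).ne' h

lemma isSpread_stretch (hx : Injective x) : IsSpread k (stretch k x) := fun i j hij => by
  rcases (hx.ne hij).lt_or_gt with hlt | hlt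
  · have := stretch_add_lt_stretch (k := k) hlt
    rw [abs_sub_comm, abs_of_pos (by linarith)]; linarith
  · have := stretch_add_lt_stretch (k := k) hlt
    rw [abs_of_pos (by linarith)]; linarith

lemma IsSpread.squeeze_mem {a b : ℤ} (hy : IsSpread k y) (hbd : ∀ i, a ≤ y i ∧ y i < b)
    (i : ι) : a ≤ squeeze k y i ∧ squeeze k y i < b - k * (Fintype.card ι - 1) := by
  have hlow := hy.add_one_mul_rank_le (fun i => (hbd i).1) i
  have hupp := hy.add_one_mul_card_sub_rank_le (fun i => (hbd i).2) i
  have : rank y i < Fintype.card ι := rank_lt_card y i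
  unfold squeeze
  constructor <;> linarith

lemma stretch_mem {a b : ℤ} (hbd : ∀ i, a ≤ x i ∧ x i < b - k * (Fintype.card ι - 1))
    (i : ι) : a ≤ stretch k x i ∧ stretch k x i < b := by
  have : rank x i + 1 ≤ Fintype.card ι := rank_lt_card x i
  have hr : (0 : ℤ) ≤ k * rank x i := by positivity
  have hc : (k : ℤ) * rank x i ≤ k * (Fintype.card ι - 1) :=
    mul_le_mul_of_nonneg_left (by linarith) k.cast_nonneg
  unfold stretch
  constructor <;> linarith [hbd i]

def spreadTuplesEquiv (k : ℕ) (a b : ℤ) :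
    spreadTuples ι k a b ≃ spreadTuples ι 0 a (b - k * (Fintype.card ι - 1)) where
  toFun y := ⟨squeeze k y, y.2.2.squeeze_mem y.2.1, y.2.2.isSpread_zero_squeeze⟩
  invFun x := ⟨stretch k x, stretch_mem x.2.1, isSpread_stretch (isSpread_zero_iff.1 x.2.2)⟩
  left_inv y := Subtype.ext y.2.2.stretch_squeeze
  right_inv _ := Subtype.ext squeeze_stretch

def spreadTuplesZeroEquiv (a b : ℤ) : spreadTuples ι 0 a b ≃ (ι ↪ Set.Ico a b) where
  toFun y := ⟨fun i => ⟨y.1 i, y.2.1 i⟩,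
    fun _ _ h => isSpread_zero_iff.1 y.2.2 (congrArg Subtype.val h)⟩
  invFun f := ⟨fun i => f i, fun i => (f i).2,
    isSpread_zero_iff.2 (Subtype.val_injective.comp f.injective)⟩
  left_inv _ := rfl
  right_inv _ := rfl

theorem card_spreadTuples (k : ℕ) (a b : ℤ) :
    Nat.card (spreadTuples ι k a b) =
      (b - a - k * (Fintype.card ι - 1)).toNat.descFactorial (Fintype.card ι) := by
  classical
  rw [Nat.card_congr ((spreadTuplesEquiv k a b).trans (spreadTuplesZeroEquiv _ _)),
    Nat.card_eq_fintype_card, Fintype.card_embedding_eq, Fintype.card_Ico, Int.card_Ico,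
    sub_right_comm]

end Squeeze

section Translation

variable {ι G : Type*} [AddCommGroup G] (q : G → Prop)

def normalizeEquiv (i₀ : ι) :
    {c : ι → G // Pairwise fun i j => q (c i - c j)} ≃
      G × {c : ι → G // (Pairwise fun i j => q (c i - c j)) ∧ c i₀ = 0} where
  toFun c := (c.1 i₀, ⟨fun i => c.1 i - c.1 i₀,
    fun i j hij => by simpa only [sub_sub_sub_cancel_right] using c.2 hij, sub_self _⟩)
  invFun p := ⟨fun i => p.2.1 i + p.1,
    fun i j hij => by simpa only [add_sub_add_right_eq_sub] using p.2.2.1 hij⟩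
  left_inv c := Subtype.ext <| funext fun i => sub_add_cancel _ _
  right_inv p := by
    obtain ⟨g, c, hc, hc₀⟩ := p
    ext i <;> simp [hc₀]

variable {q} {m : ℕ}

def tailEquiv (hq : ∀ x, q (-x) ↔ q x) :
    {c : Fin (m + 1) → G // (Pairwise fun i j => q (c i - c j)) ∧ c 0 = 0} ≃
      {t : Fin m → G // (∀ i, q (t i)) ∧ Pairwise fun i j => q (t i - t j)} where
  toFun c := ⟨Fin.tail c.1, fun i => by simpa [Fin.tail, c.2.2] using c.2.1 (Fin.succ_ne_zero i),
    fun i j hij => c.2.1 (Fin.succ_injective _ |>.ne hij)⟩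
  invFun t := ⟨Fin.cons 0 t.1, fun i j hij => by
    rcases Fin.eq_zero_or_eq_succ i with rfl | ⟨i, rfl⟩ <;>
      rcases Fin.eq_zero_or_eq_succ j with rfl | ⟨j, rfl⟩
    · exact absurd rfl hij
    · simpa [hq] using t.2.1 j
    · simpa using t.2.1 i
    · simpa using t.2.2 (fun h => hij (congrArg _ h)), rfl⟩
  left_inv c := Subtype.ext <| by
    conv_rhs => rw [← Fin.cons_self_tail c.1, c.2.2]
  right_inv t := Subtype.ext <| Fin.tail_cons (α := fun _ => G) 0 t.1

end Translation

section Coloring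

variable {N : ℕ} {k : ℕ}

def AvoidsGains (k : ℕ) (x : ZMod N) : Prop :=
  ∀ m : ℤ, -(k : ℤ) ≤ m → m ≤ k → x ≠ m

lemma avoidsGains_neg {x : ZMod N} : AvoidsGains k (-x) ↔ AvoidsGains k x := by
  refine ⟨fun h m hm₁ hm₂ hx => ?_, fun h m hm₁ hm₂ hx => ?_⟩
  · exact h (-m) (by omega) (by omega) (by rw [hx, Int.cast_neg])
  · exact h (-m) (by omega) (by omega) (by rw [← neg_neg x, hx, Int.cast_neg])

lemma avoidsGains_iff_val [NeZero N] {x : ZMod N} :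
    AvoidsGains k x ↔ k < x.val ∧ x.val + k < N := by
  have hx : x = ((x.val : ℤ) : ZMod N) := by simp
  have hval : x.val < N := x.val_lt
  constructor
  · intro h
    by_contra! hbad
    by_cases hk : x.val ≤ k
    · exact h x.val (by omega) (by omega) hx
    · refine h (x.val - N) (by omega) (by omega) ?_
      rw [hx]; simp
  · rintro ⟨hlow, hupp⟩ m hm₁ hm₂ rfl
    have := ZMod.val_intCast (n := N) m
    rcases le_or_gt 0 m with hm | hm
    · rw [Int.emod_eq_of_lt hm (by omega)] at this
      omega
    · rw [← Int.add_emod_right, Int.emod_eq_of_lt (by omega) (by omega)] at this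
      omega

lemma avoidsGains_intCast_iff {d : ℤ} (hd : |d| + k < N) :
    AvoidsGains k (d : ZMod N) ↔ (k : ℤ) < |d| := by
  constructor
  · intro h
    by_contra! hle
    exact h d (by linarith [neg_abs_le d]) (by linarith [le_abs_self d]) rfl
  · intro h m hm₁ hm₂ hdm
    have hdvd := (ZMod.intCast_eq_intCast_iff_dvd_sub _ _ _).1 hdm.symm
    have hm : |m| ≤ k := abs_le.2 ⟨hm₁, hm₂⟩
    have hdm' : d - m = 0 :=
      Int.eq_zero_of_abs_lt_dvd hdvd (by linarith [abs_sub d m])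
    rw [sub_eq_zero.1 hdm'] at h
    linarith

lemma avoidsGains_sub_iff [NeZero N] {x y : ZMod N} (hx : AvoidsGains k x)
    (hy : AvoidsGains k y) : AvoidsGains k (x - y) ↔ (k : ℤ) < |(x.val : ℤ) - y.val| := by
  rw [avoidsGains_iff_val] at hx hy
  have hxy : x - y = (((x.val : ℤ) - y.val : ℤ) : ZMod N) := by simp
  have hd : |(x.val : ℤ) - y.val| < N - k := abs_sub_lt_iff.2 ⟨by omega, by omega⟩
  rw [hxy, avoidsGains_intCast_iff (by linarith)]

lemma val_intCast_of_lt [NeZero N] {d : ℤ} (h₀ : 0 ≤ d) (h : d < N) :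
    ((d : ZMod N).val : ℤ) = d := by
  rw [ZMod.val_intCast, Int.emod_eq_of_lt h₀ h]

def valEquiv {ι : Type*} [NeZero N] :
    {t : ι → ZMod N //
      (∀ i, AvoidsGains k (t i)) ∧ Pairwise fun i j => AvoidsGains k (t i - t j)} ≃
      spreadTuples ι k (k + 1) (N - k) where
  toFun t := ⟨fun i => (t.1 i).val,
    fun i => by have := avoidsGains_iff_val.1 (t.2.1 i); beta_reduce; omega,
    fun i j hij => (avoidsGains_sub_iff (t.2.1 i) (t.2.1 j)).1 (t.2.2 hij)⟩
  invFun y :=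
    have hval (i) : (((y.1 i : ℤ) : ZMod N).val : ℤ) = y.1 i := by
      have := y.2.1 i; exact val_intCast_of_lt (by omega) (by omega)
    have havoid (i) : AvoidsGains k ((y.1 i : ℤ) : ZMod N) := by
      have := y.2.1 i; have := hval i; exact avoidsGains_iff_val.2 (by omega)
    ⟨fun i => (y.1 i : ZMod N), havoid, fun i j hij => by
      beta_reduce
      rw [avoidsGains_sub_iff (havoid i) (havoid j), hval, hval]; exact y.2.2 hij⟩
  left_inv t := Subtype.ext <| funext fun i => by simp
  right_inv y := Subtype.ext <| funext fun i => by
    have := y.2.1 i; exact val_intCast_of_lt (by omega) (by omega)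

end Coloring

end GainGraphColoring

open GainGraphColoring

theorem stmt_14_general (k n N : ℕ) (hn : 0 < n) (hN : n * k < N) :
    (Nat.card {c : Fin n → ZMod N //
        ∀ i j : Fin n, i ≠ j → ∀ m : ℤ, -(k : ℤ) ≤ m → m ≤ (k : ℤ) →
          c i - c j ≠ (m : ZMod N)} : ℤ)
      = (N : ℤ) * ∏ r ∈ Finset.range (n - 1), ((N : ℤ) - n * k - (r + 1)) := by
  obtain ⟨m, rfl⟩ : ∃ m, n = m + 1 := ⟨n - 1, by omega⟩
  have : NeZero N := ⟨((Nat.zero_le _).trans_lt hN).ne'⟩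
  have hL : 0 ≤ (N : ℤ) - k - (k + 1) - k * (m - 1) := by
    have : ((m + 1) * k : ℤ) < N := by exact_mod_cast hN
    linarith
  change (Nat.card {c : Fin (m + 1) → ZMod N //
    Pairwise fun i j => AvoidsGains k (c i - c j)} : ℤ) = _
  rw [Nat.card_congr <| (normalizeEquiv (AvoidsGains k) 0).trans <| (Equiv.refl _).prodCongr <|
      (tailEquiv fun _ => avoidsGains_neg).trans valEquiv,
    Nat.card_prod, Nat.card_zmod, card_spreadTuples, Fintype.card_fin]
  push_cast
  rw [← descPochhammer_eval_eq_descFactorial, Int.toNat_of_nonneg hL,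
    descPochhammer_eval_eq_prod_range]
  congr 1
  exact prod_congr rfl fun r _ => by ring

/-- For positive integers k, n and N > nk, the number of zero-free proper
colorings c : {1,…,n} → ℤ_N of the gain graph [−k,k]K_n — i.e. colorings such that for
all i ≠ j the difference c(i) − c(j) is not congruent mod N to any element of
{−k,…,−1,0,1,…,k} — equals N·(N−nk−1)_{n−1} = N·(N−nk−1)(N−nk−2)⋯(N−nk−n+1). -/
theorem stmt_14 (k n N : ℕ) (hk : 0 < k) (hn : 0 < n) (hN : n * k < N) :
    (Nat.card {c : Fin n → ZMod N //
        ∀ i j : Fin n, i ≠ j → ∀ m : ℤ, -(k : ℤ) ≤ m → m ≤ (k : ℤ) →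
          c i - c j ≠ (m : ZMod N)} : ℤ)
      = (N : ℤ) * ∏ r ∈ Finset.range (n - 1), ((N : ℤ) - n * k - (r + 1)) :=
  stmt_14_general k n N hn hN
end

section
/- The number of n-element subsets of the cyclic group ℤ_N (N > nk) such that any two distinct elements differ (cyclically) by more than k equals (N/(N−nk))·C(N−nk, n). -/
/-!
Translations of `ZMod N` permute the admissible `n`-sets, so double counting the pairs `(A, x)`
with `x ∈ A` gives `n · #S = N · #S₀`, where `S₀` consists of the admissible sets containing `0`.
The other elements of such a set lie in the window `{k + 1, …, N - k - 1}`, on which the cyclic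
condition is the linear one `|a - b| > k`; removing `0` and shifting down by `k + 1` identifies
`S₀` with the `(n - 1)`-subsets of `{0, …, N - 2k - 2}` with gaps `> k`. Splitting on the largest
element, these obey Pascal's recursion and number `C(N - nk - 1, n - 1)`; finally
`M · C(M - 1, n - 1) = n · C(M, n)`.
-/

open Finset

section DoubleCounting

variable {G : Type*} [AddGroup G] [Fintype G] [DecidableEq G]

theorem card_mul_eq_card_mul_card_filter_zero_mem {S : Finset (Finset G)} {n : ℕ}
    (hcard : ∀ A ∈ S, #A = n) (hS : ∀ A ∈ S, ∀ g : G, A.map (Equiv.addRight g).toEmbedding ∈ S) :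
    #S * n = Fintype.card G * #{A ∈ S | 0 ∈ A} := by
  refine card_mul_eq_card_mul (t := univ) (fun A x => x ∈ A) (fun A hA => ?_) (fun x _ => ?_)
  · simpa [bipartiteAbove] using hcard A hA
  · -- translation by `-x` carries the sets containing `x` onto those containing `0`
    refine card_nbij' (·.map (Equiv.addRight (-x)).toEmbedding)
      (·.map (Equiv.addRight x).toEmbedding) ?_ ?_ ?_ ?_ <;> intro A hA
    all_goals simp_all [bipartiteBelow, map_map]
    all_goals ext; simp

end DoubleCounting

def separatedSubsets (k L m : ℕ) : Finset (Finset ℕ) :=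
  {t ∈ (range L).powersetCard m | (t : Set ℕ).Pairwise fun a b => a + k < b ∨ b + k < a}

section

variable {k L m : ℕ}

theorem mem_separatedSubsets {t : Finset ℕ} :
    t ∈ separatedSubsets k L m ↔
      (∀ a ∈ t, a < L) ∧ #t = m ∧ (t : Set ℕ).Pairwise fun a b => a + k < b ∨ b + k < a := by
  simp only [separatedSubsets, mem_filter, mem_powersetCard, subset_iff, mem_range, and_assoc]

theorem filter_notMem_separatedSubsets_succ :
    {t ∈ separatedSubsets k (L + 1) m | L ∉ t} = separatedSubsets k L m := by
  ext t
  simp only [mem_filter, mem_separatedSubsets]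
  constructor
  · rintro ⟨⟨hlt, hcard, hsep⟩, hL⟩
    exact ⟨fun a ha => lt_of_le_of_ne (Nat.le_of_lt_succ (hlt a ha)) (ne_of_mem_of_not_mem ha hL),
      hcard, hsep⟩
  · rintro ⟨hlt, hcard, hsep⟩
    exact ⟨⟨fun a ha => (hlt a ha).trans L.lt_succ_self, hcard, hsep⟩, fun hL => (hlt L hL).false⟩

theorem filter_mem_separatedSubsets_succ :
    {t ∈ separatedSubsets k (L + 1) (m + 1) | L ∈ t} =
      (separatedSubsets k (L - k) m).image (insert L) := by
  ext t
  simp only [mem_filter, mem_image, mem_separatedSubsets]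
  constructor
  · rintro ⟨⟨hlt, hcard, hsep⟩, hL⟩
    refine ⟨t.erase L, ⟨fun a ha => ?_, by rw [card_erase_of_mem hL, hcard]; rfl,
      hsep.mono (by simp)⟩, insert_erase hL⟩
    have ha' := ne_of_mem_erase ha
    have := hsep (mem_of_mem_erase ha) hL ha'
    have := hlt a (mem_of_mem_erase ha)
    omega
  · rintro ⟨t, ⟨hlt, hcard, hsep⟩, rfl⟩
    have hL : L ∉ t := fun hL => by have := hlt L hL; omega
    refine ⟨⟨fun a ha => ?_, by rw [card_insert_of_notMem hL, hcard], ?_⟩, mem_insert_self L t⟩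
    · rcases mem_insert.mp ha with rfl | ha
      · omega
      · have := hlt a ha; omega
    · rw [coe_insert, Set.pairwise_insert]
      refine ⟨hsep, fun b hb _ => ?_⟩
      have := hlt b hb
      omega

theorem card_separatedSubsets_succ_succ :
    #(separatedSubsets k (L + 1) (m + 1)) =
      #(separatedSubsets k (L - k) m) + #(separatedSubsets k L (m + 1)) := by
  rw [← card_filter_add_card_filter_not (L ∈ ·), filter_mem_separatedSubsets_succ,
    filter_notMem_separatedSubsets_succ, card_image_of_injOn]
  intro s hs t ht hst
  have hL : ∀ u ∈ separatedSubsets k (L - k) m, L ∉ u := fun u hu hL => by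
    have := (mem_separatedSubsets.mp hu).1 L hL
    omega
  simpa [erase_insert (hL s hs), erase_insert (hL t ht)] using congrArg (erase · L) hst

theorem card_separatedSubsets (k L m : ℕ) :
    #(separatedSubsets k L m) = (L - (m - 1) * k).choose m := by
  induction L using Nat.strong_induction_on generalizing m with
  | _ L ih =>
    match L, m with
    | _, 0 => simp [separatedSubsets, filter_singleton]
    | 0, m + 1 => simp [separatedSubsets]
    | L + 1, m + 1 =>
      rw [card_separatedSubsets_succ_succ, ih _ (by omega), ih _ (by omega)]
      rcases m with _ | m
      · simp
        omega
      · simp only [Nat.add_sub_cancel]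
        rw [show L - k - m * k = L - (m + 1) * k by rw [Nat.sub_sub]; ring_nf]
        by_cases hL : (m + 1) * k ≤ L
        · rw [show L + 1 - (m + 1) * k = L - (m + 1) * k + 1 by omega, Nat.choose_succ_succ]
        · rw [Nat.choose_eq_zero_of_lt (by omega), Nat.choose_eq_zero_of_lt (by omega),
            Nat.choose_eq_zero_of_lt (by omega)]

end

def FarApart {N : ℕ} (k : ℕ) (x y : ZMod N) : Prop :=
  ∀ m : ℤ, -(k : ℤ) ≤ m → m ≤ k → x - y ≠ m

section

variable {N k : ℕ}

theorem FarApart.symm {x y : ZMod N} (h : FarApart k x y) : FarApart k y x := by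
  intro m hm₁ hm₂ hxy
  refine h (-m) (by omega) (by omega) ?_
  rw [← neg_sub, hxy, Int.cast_neg]

theorem farApart_comm {x y : ZMod N} : FarApart k x y ↔ FarApart k y x :=
  ⟨FarApart.symm, FarApart.symm⟩

theorem farApart_add_right_iff {x y : ZMod N} (g : ZMod N) :
    FarApart k (x + g) (y + g) ↔ FarApart k x y := by
  simp only [FarApart, add_sub_add_right_eq_sub]

theorem sub_eq_intCast_iff_dvd [NeZero N] (x y : ZMod N) (m : ℤ) :
    x - y = m ↔ (N : ℤ) ∣ (x.val : ℤ) - y.val - m := by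
  rw [← ZMod.intCast_zmod_eq_zero_iff_dvd]
  push_cast [ZMod.natCast_zmod_val]
  exact sub_eq_zero.symm

theorem farApart_iff_of_val_le [NeZero N] {x y : ZMod N} (h : x.val ≤ y.val) :
    FarApart k x y ↔ x.val + k < y.val ∧ y.val + k < x.val + N := by
  have hy := ZMod.val_lt y
  simp only [FarApart, ne_eq, sub_eq_intCast_iff_dvd]
  constructor
  · intro hfar
    by_contra! hnear
    by_cases hd : y.val ≤ x.val + k
    · exact hfar (x.val - y.val) (by omega) (by omega) (by simp)
    · exact hfar (x.val + N - y.val) (by omega) (by omega) ⟨-1, by ring⟩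
  · -- `x.val - y.val - m` lies strictly between `-N` and `0`
    rintro ⟨h₁, h₂⟩ m hm₁ hm₂ ⟨c, hc⟩
    have : c < 0 := by nlinarith
    nlinarith

theorem val_natCast_add_succ {i : ℕ} (hi : i < N - 2 * k - 1) :
    ((i + (k + 1) : ℕ) : ZMod N).val = i + (k + 1) :=
  ZMod.val_cast_of_lt (by omega)

theorem zero_notMem_image_natCast_add_succ {t : Finset ℕ} (ht : ∀ i ∈ t, i < N - 2 * k - 1) :
    (0 : ZMod N) ∉ t.image fun i => ((i + (k + 1) : ℕ) : ZMod N) := by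
  simp only [mem_image, not_exists, not_and]
  intro i hi h0
  have := val_natCast_add_succ (N := N) (ht i hi)
  rw [h0, ZMod.val_zero] at this
  omega

variable [NeZero N]

theorem farApart_zero_iff {x : ZMod N} : FarApart k x 0 ↔ k < x.val ∧ x.val + k < N := by
  rw [farApart_comm, farApart_iff_of_val_le (by simp)]
  simp

theorem farApart_iff_of_val_add_lt {x y : ZMod N} (hx : x.val + k < N) (hy : y.val + k < N) :
    FarApart k x y ↔ x.val + k < y.val ∨ y.val + k < x.val := by
  rcases le_total x.val y.val with h | h
  · rw [farApart_iff_of_val_le h]; omega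
  · rw [farApart_comm, farApart_iff_of_val_le h]; omega

open Classical in
noncomputable def cyclicSeparatedSubsets (k n N : ℕ) [NeZero N] : Finset (Finset (ZMod N)) :=
  {A | #A = n ∧ (A : Set (ZMod N)).Pairwise (FarApart k)}

theorem mem_cyclicSeparatedSubsets {n : ℕ} {A : Finset (ZMod N)} :
    A ∈ cyclicSeparatedSubsets k n N ↔ #A = n ∧ (A : Set (ZMod N)).Pairwise (FarApart k) := by
  simp [cyclicSeparatedSubsets]

theorem image_val_sub_mem_separatedSubsets {n : ℕ} {A : Finset (ZMod N)}
    (hA : A ∈ cyclicSeparatedSubsets k (n + 1) N) (h0 : (0 : ZMod N) ∈ A) :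
    (A.erase 0).image (fun x => x.val - (k + 1)) ∈ separatedSubsets k (N - 2 * k - 1) n := by
  obtain ⟨hcard, hsep⟩ := mem_cyclicSeparatedSubsets.mp hA
  have hwin : ∀ x ∈ A.erase 0, k < x.val ∧ x.val + k < N := fun x hx =>
    farApart_zero_iff.mp (hsep (mem_of_mem_erase hx) h0 (ne_of_mem_erase hx))
  have hinj : Set.InjOn (fun x : ZMod N => x.val - (k + 1)) (A.erase 0) := fun x hx y hy hxy => by
    have := hwin x hx; have := hwin y hy
    exact ZMod.val_injective N (by simp only at hxy; omega)
  refine mem_separatedSubsets.mpr ⟨?_, ?_, ?_⟩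
  · simp only [mem_image]
    rintro _ ⟨x, hx, rfl⟩
    have := hwin x hx
    omega
  · rw [card_image_of_injOn hinj, card_erase_of_mem h0, hcard, Nat.add_sub_cancel]
  · rw [coe_image, hinj.pairwise_image]
    intro x hx y hy hxy
    have hx' := hwin x hx; have hy' := hwin y hy
    have := (farApart_iff_of_val_add_lt hx'.2 hy'.2).mp
      (hsep (mem_of_mem_erase hx) (mem_of_mem_erase hy) hxy)
    simp only [Function.onFun]
    omega

theorem insert_zero_image_mem_cyclicSeparatedSubsets {n : ℕ} {t : Finset ℕ}
    (ht : t ∈ separatedSubsets k (N - 2 * k - 1) n) :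
    insert 0 (t.image fun i => ((i + (k + 1) : ℕ) : ZMod N)) ∈
      cyclicSeparatedSubsets k (n + 1) N := by
  obtain ⟨hlt, hcard, hsep⟩ := mem_separatedSubsets.mp ht
  have hval i (hi : i ∈ t) := val_natCast_add_succ (N := N) (hlt i hi)
  have hinj : Set.InjOn (fun i => ((i + (k + 1) : ℕ) : ZMod N)) t := fun i hi j hj hij => by
    have h := congrArg ZMod.val hij
    simp only [hval i hi, hval j hj] at h
    omega
  have hfar0 : ∀ x ∈ t.image fun i => ((i + (k + 1) : ℕ) : ZMod N), FarApart k x 0 := by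
    simp only [mem_image]
    rintro _ ⟨i, hi, rfl⟩
    have := hlt i hi
    rw [farApart_zero_iff, hval i hi]
    omega
  refine mem_cyclicSeparatedSubsets.mpr ⟨?_, ?_⟩
  · rw [card_insert_of_notMem (zero_notMem_image_natCast_add_succ hlt),
      card_image_of_injOn hinj, hcard]
  · rw [coe_insert, Set.pairwise_insert]
    refine ⟨?_, fun x hx _ => ⟨farApart_comm.mp (hfar0 x hx), hfar0 x hx⟩⟩
    rw [coe_image, hinj.pairwise_image]
    intro i hi j hj hij
    have := hlt i hi; have := hlt j hj
    rw [Function.onFun, farApart_iff_of_val_add_lt (by rw [hval i hi]; omega)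
      (by rw [hval j hj]; omega), hval i hi, hval j hj]
    have := hsep hi hj hij
    omega

theorem card_filter_zero_mem_cyclicSeparatedSubsets (n : ℕ) :
    #{A ∈ cyclicSeparatedSubsets k (n + 1) N | 0 ∈ A} =
      #(separatedSubsets k (N - 2 * k - 1) n) := by
  refine card_nbij' (fun A => (A.erase 0).image fun x => x.val - (k + 1))
    (fun t => insert 0 (t.image fun i => ((i + (k + 1) : ℕ) : ZMod N))) ?_ ?_ ?_ ?_
  · intro A hA
    obtain ⟨hA, h0⟩ := mem_filter.mp hA
    exact image_val_sub_mem_separatedSubsets hA h0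
  · intro t ht
    exact mem_filter.mpr ⟨insert_zero_image_mem_cyclicSeparatedSubsets ht, mem_insert_self _ _⟩
  · intro A hA
    obtain ⟨hA, h0⟩ := mem_filter.mp hA
    dsimp only
    rw [image_image, image_congr (g := id), image_id, insert_erase h0]
    intro x hx
    have := farApart_zero_iff.mp
      ((mem_cyclicSeparatedSubsets.mp hA).2 (mem_of_mem_erase hx) h0 (ne_of_mem_erase hx))
    simp only [Function.comp_apply, id]
    rw [Nat.sub_add_cancel (by omega), ZMod.natCast_zmod_val]
  · intro t ht
    have hlt := (mem_separatedSubsets.mp ht).1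
    dsimp only
    rw [erase_insert (zero_notMem_image_natCast_add_succ hlt), image_image, image_congr (g := id),
      image_id]
    intro i hi
    simp only [Function.comp_apply, id, val_natCast_add_succ (hlt i hi), Nat.add_sub_cancel]

theorem map_addRight_mem_cyclicSeparatedSubsets {n : ℕ} {A : Finset (ZMod N)}
    (hA : A ∈ cyclicSeparatedSubsets k n N) (g : ZMod N) :
    A.map (Equiv.addRight g).toEmbedding ∈ cyclicSeparatedSubsets k n N := by
  obtain ⟨hcard, hsep⟩ := mem_cyclicSeparatedSubsets.mp hA
  refine mem_cyclicSeparatedSubsets.mpr ⟨by rw [card_map, hcard], ?_⟩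
  rw [coe_map, (Equiv.addRight g).toEmbedding.injective.injOn.pairwise_image]
  intro x hx y hy hxy
  exact (farApart_add_right_iff g).mpr (hsep hx hy hxy)

theorem natCard_eq_card_cyclicSeparatedSubsets (n : ℕ) :
    Nat.card {A : Finset (ZMod N) // #A = n ∧ (A : Set (ZMod N)).Pairwise (FarApart k)} =
      #(cyclicSeparatedSubsets k n N) := by
  classical
  rw [Nat.card_eq_fintype_card, Fintype.card_subtype]
  simp [cyclicSeparatedSubsets]

end

theorem stmt_15_general (k n N : ℕ) (hn : 0 < n) (hN : n * k < N) :
    (N - n * k) * Nat.card {A : Finset (ZMod N) // A.card = n ∧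
        ∀ a ∈ A, ∀ b ∈ A, a ≠ b → ∀ m : ℤ, -(k : ℤ) ≤ m → m ≤ (k : ℤ) →
          a - b ≠ (m : ZMod N)}
      = N * (N - n * k).choose n := by
  have : NeZero N := ⟨by omega⟩
  obtain ⟨n, rfl⟩ := Nat.exists_eq_add_one_of_ne_zero hn.ne'
  have hcount :=
    card_mul_eq_card_mul_card_filter_zero_mem (S := cyclicSeparatedSubsets k (n + 1) N)
    (fun A hA => (mem_cyclicSeparatedSubsets.mp hA).1)
    (fun A hA => map_addRight_mem_cyclicSeparatedSubsets hA)
  rw [ZMod.card, card_filter_zero_mem_cyclicSeparatedSubsets, card_separatedSubsets] at hcount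
  obtain ⟨M, hM⟩ : ∃ M, N - (n + 1) * k = M + 1 := ⟨N - (n + 1) * k - 1, by omega⟩
  have hL : (N - 2 * k - 1 - (n - 1) * k).choose n = M.choose n := by
    rcases n with _ | n
    · simp
    · have : (n + 1 + 1) * k = n * k + 2 * k := by ring
      congr 1
      simp only [Nat.add_sub_cancel]
      omega
  rw [hL] at hcount
  -- the subtype is `{A // #A = n + 1 ∧ (A : Set _).Pairwise (FarApart k)}` up to unfolding
  calc (N - (n + 1) * k) * Nat.card _ = (M + 1) * #(cyclicSeparatedSubsets k (n + 1) N) :=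
        congrArg₂ (· * ·) hM (natCard_eq_card_cyclicSeparatedSubsets (n + 1))
    _ = N * (M + 1).choose (n + 1) := Nat.eq_of_mul_eq_mul_right n.succ_pos <| by
        rw [mul_assoc, hcount, mul_left_comm, Nat.add_one_mul_choose_eq, mul_assoc]
    _ = N * (N - (n + 1) * k).choose (n + 1) := by rw [hM]

/-- The number of n-element subsets of ℤ_N (N > nk) in which any two
distinct elements differ cyclically by more than k (no difference lies in
{1,…,k} ∪ {N−k,…,N−1}, i.e. in the image of {−k,…,k} ∖ {0}) equals
(N/(N−nk))·C(N−nk, n); stated integrally as (N−nk)·count = N·C(N−nk, n). -/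
theorem stmt_15 (k n N : ℕ) (hk : 0 < k) (hn : 0 < n) (hN : n * k < N) :
    (N - n * k) * Nat.card {A : Finset (ZMod N) // A.card = n ∧
        ∀ a ∈ A, ∀ b ∈ A, a ≠ b → ∀ m : ℤ, -(k : ℤ) ≤ m → m ≤ (k : ℤ) →
          a - b ≠ (m : ZMod N)}
      = N * (N - n * k).choose n :=
  stmt_15_general k n N hn hN
end

section
/- If n points Q_1, …, Q_n in ℝ^d contain a minimal affinely dependent subset D of size δ ≤ d+1, then the set of ideal points {p_{ij} : Q_i, Q_j ∈ D} (directions of lines between pairs of points of D) spans a projective subspace of dimension exactly δ − 3, which is strictly less than min(δ−2, d−1); hence such a configuration fails ideal general position. -/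
open Finset Module

/- A minimal affinely dependent set of `δ` points spans an affine subspace of dimension exactly
`δ - 2`: dependence caps the dimension of the vector span at `δ - 2`, while the `δ - 1` points left
after deleting one are independent and already span that much. The ideal points `p_ij` of `D` span
the projectivization of this vector span, of dimension `δ - 3`, whereas ideal general position
demands `min (δ - 2) (d - 1)` for the connected edge set on `D`, and `δ ≤ d + 1` makes that larger. -/

theorem finrank_vectorSpan_image_of_minimal_affineDependent {k V P ι : Type*} [DecidableEq ι]
    [DivisionRing k] [AddCommGroup V] [Module k V] [AddTorsor V P]
    (p : ι → P) (s : Finset ι) (hdep : ¬ AffineIndependent k (fun j : (s : Set ι) => p j))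
    (hmin : ∀ i ∈ s, AffineIndependent k (fun j : ((s.erase i : Finset ι) : Set ι) => p j)) :
    finrank k (vectorSpan k (p '' s)) = #s - 2 := by
  have htwo : 2 ≤ #s := by
    by_contra! hlt
    have : Subsingleton (s : Set ι) := card_le_one_iff_subsingleton_coe.mp (by omega : #s ≤ 1)
    exact hdep (affineIndependent_of_subsingleton k _)
  obtain ⟨i, hi⟩ : s.Nonempty := card_pos.mp (by omega)
  have hle : finrank k (vectorSpan k (p '' s)) ≤ #s - 2 := by
    rw [Set.image_eq_range]
    exact (finrank_vectorSpan_le_iff_not_affineIndependent k _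
      (by simp only [coe_sort_coe, Fintype.card_coe]; omega)).2 hdep
  have hge : #s - 2 ≤ finrank k (vectorSpan k (p '' s)) := by
    have hrank := (hmin i hi).finrank_vectorSpan (n := #s - 2)
      (by simp only [coe_sort_coe, Fintype.card_coe, card_erase_of_mem hi]; omega)
    rw [← Set.image_eq_range] at hrank
    have := finiteDimensional_vectorSpan_of_finite k ((s : Set ι).toFinite.image p)
    exact hrank ▸ Submodule.finrank_mono
      (vectorSpan_mono k (Set.image_mono (coe_subset.mpr (erase_subset i s))))
  exact le_antisymm hle hge

theorem stmt_17_general (n d : ℕ) (Q : Fin n → EuclideanSpace ℝ (Fin d))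
    (D : Finset (Fin n)) (δ : ℕ) (hδ : D.card = δ) (hδd : δ ≤ d + 1)
    (hdep : ¬ AffineIndependent ℝ (fun i : (D : Set (Fin n)) => Q i))
    (hmin : ∀ i ∈ D,
        AffineIndependent ℝ (fun j : ((D.erase i : Finset (Fin n)) : Set (Fin n)) => Q j)) :
    Module.finrank ℝ (vectorSpan ℝ (Q '' (D : Set (Fin n)))) = δ - 2 ∧
    (δ : ℤ) - 3 < min ((δ : ℤ) - 2) ((d : ℤ) - 1) := by
  refine ⟨hδ ▸ finrank_vectorSpan_image_of_minimal_affineDependent Q D hdep hmin, ?_⟩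
  rw [lt_min_iff]
  omega

/-- If among n points Q_1,…,Q_n in ℝ^d there is a minimal affinely
dependent subset D of size δ ≤ d+1 (with distinct points, so δ ≥ 3), then the ideal
points p_{ij} of the lines between pairs of points of D — whose projective span is the
ideal part of the affine span of D, i.e. the projectivization of the vector span of the
differences — span a projective subspace of dimension exactly δ − 3 (linear rank δ − 2),
which is strictly less than min(δ−2, d−1); hence the configuration fails ideal general
position. -/
theorem stmt_17 (n d : ℕ) (Q : Fin n → EuclideanSpace ℝ (Fin d))
    (D : Finset (Fin n)) (δ : ℕ) (hδ : D.card = δ) (hδ3 : 3 ≤ δ) (hδd : δ ≤ d + 1)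
    (hinj : Set.InjOn Q (D : Set (Fin n)))
    (hdep : ¬ AffineIndependent ℝ (fun i : (D : Set (Fin n)) => Q i))
    (hmin : ∀ i ∈ D,
        AffineIndependent ℝ (fun j : ((D.erase i : Finset (Fin n)) : Set (Fin n)) => Q j)) :
    Module.finrank ℝ (vectorSpan ℝ (Q '' (D : Set (Fin n)))) = δ - 2 ∧
    (δ : ℤ) - 3 < min ((δ : ℤ) - 2) ((d : ℤ) - 1) :=
  stmt_17_general n d Q D δ hδ hδd hdep hmin
end
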